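/- arXiv:2403.03624 — 4 statements merged into one kernel-verified Lean document; each statement's English description precedes it below -/
import Mathlib

section
/- Let A ∈ ℝ^{n×n}, let W ∈ ℝ^{f×n} be injective (full column rank), and let W⁺ ∈ ℝ^{n×f} satisfy W⁺ W = I_n. If ‖W A W⁺‖_∞ < 1, then every trajectory (x_t)_{t≥0} of x_{t+1} = A x_t converges to 0 as t → ∞; in particular every eigenvalue of A has modulus strictly less than 1 (A is Schur stable). -/
noncomputable def matInfNorm {f : ℕ} (C : Matrix (Fin f) (Fin f) ℝ) : ℝ :=
  ⨆ i, ∑ j, |C i j|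

lemma matInfNorm_nonneg {f : ℕ} (C : Matrix (Fin f) (Fin f) ℝ) : 0 ≤ matInfNorm C :=
  Real.iSup_nonneg fun _ => Finset.sum_nonneg fun _ _ => abs_nonneg _

lemma mulVec_norm_le {f : ℕ} (C : Matrix (Fin f) (Fin f) ℝ) (y : Fin f → ℝ) :
    ‖C.mulVec y‖ ≤ matInfNorm C * ‖y‖ := by
  rw [pi_norm_le_iff_of_nonneg (mul_nonneg (matInfNorm_nonneg C) (norm_nonneg y))]
  intro i
  calc ‖C.mulVec y i‖ = |∑ j, C i j * y j| := by rfl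
    _ ≤ ∑ j, |C i j * y j| := Finset.abs_sum_le_sum_abs _ _
    _ ≤ ∑ j, |C i j| * ‖y‖ := by
        refine Finset.sum_le_sum fun j _ => ?_
        rw [abs_mul]
        exact mul_le_mul_of_nonneg_left ((Real.norm_eq_abs _ ▸ norm_le_pi_norm y j)) (abs_nonneg _)
    _ = (∑ j, |C i j|) * ‖y‖ := by rw [Finset.sum_mul]
    _ ≤ matInfNorm C * ‖y‖ :=
        mul_le_mul_of_nonneg_right
          (le_ciSup (f := fun i => ∑ j, |C i j|)
            (Set.Finite.bddAbove (Set.finite_range _)) i) (norm_nonneg _)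

theorem stmt3 (n f : ℕ) (A : Matrix (Fin n) (Fin n) ℝ)
    (W : Matrix (Fin f) (Fin n) ℝ) (hWinj : Function.Injective W.mulVec)
    (Wp : Matrix (Fin n) (Fin f) ℝ) (hW : Wp * W = 1)
    (hss : matInfNorm (W * A * Wp) < 1) :
    (∀ x : ℕ → Fin n → ℝ, (∀ t, x (t + 1) = A.mulVec (x t)) →
        Filter.Tendsto x Filter.atTop (nhds 0)) ∧
    (∀ μ : ℂ, μ ∈ spectrum ℂ (A.map Complex.ofReal) → ‖μ‖ < 1) := by
  set M := W * A * Wp with hM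
  have hMW : M * W = W * A := by
    rw [hM, Matrix.mul_assoc, Matrix.mul_assoc, hW, Matrix.mul_one]
  have hK0 : 0 ≤ matInfNorm M := matInfNorm_nonneg M
  have part1 : ∀ x : ℕ → Fin n → ℝ, (∀ t, x (t + 1) = A.mulVec (x t)) →
      Filter.Tendsto x Filter.atTop (nhds 0) := by
    intro x hx
    have key : ∀ t, ‖W.mulVec (x t)‖ ≤ (matInfNorm M) ^ t * ‖W.mulVec (x 0)‖ := by
      intro t
      induction t with
      | zero => simp
      | succ t ih =>
        have h1 : W.mulVec (x (t + 1)) = M.mulVec (W.mulVec (x t)) := by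
          rw [hx t, Matrix.mulVec_mulVec, Matrix.mulVec_mulVec, hMW]
        calc ‖W.mulVec (x (t + 1))‖ = ‖M.mulVec (W.mulVec (x t))‖ := by rw [h1]
          _ ≤ matInfNorm M * ‖W.mulVec (x t)‖ := mulVec_norm_le _ _
          _ ≤ matInfNorm M * ((matInfNorm M) ^ t * ‖W.mulVec (x 0)‖) :=
              mul_le_mul_of_nonneg_left ih hK0
          _ = (matInfNorm M) ^ (t + 1) * ‖W.mulVec (x 0)‖ := by ring
    have hWx : Filter.Tendsto (fun t => W.mulVec (x t)) Filter.atTop (nhds 0) := by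
      rw [tendsto_zero_iff_norm_tendsto_zero]
      refine squeeze_zero (fun t => norm_nonneg _) key ?_
      have := (tendsto_pow_atTop_nhds_zero_of_lt_one hK0 hss).mul_const ‖W.mulVec (x 0)‖
      simpa using this
    have hcont : Continuous (Wp.mulVecLin) := Wp.mulVecLin.continuous_of_finiteDimensional
    have hxeq : x = fun t => Wp.mulVecLin (W.mulVec (x t)) := by
      funext t
      simp [Matrix.mulVecLin_apply, Matrix.mulVec_mulVec, hW, Matrix.one_mulVec]
    rw [hxeq]
    have h2 := (hcont.tendsto 0).comp hWx
    rw [map_zero] at h2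
    exact h2
  refine ⟨part1, ?_⟩
  intro μ hμ
  rw [spectrum.mem_iff] at hμ
  rw [Matrix.isUnit_iff_isUnit_det, isUnit_iff_ne_zero, not_not] at hμ
  obtain ⟨v, hv0, hv⟩ := (Matrix.exists_mulVec_eq_zero_iff).mpr hμ
  have heig : (A.map Complex.ofReal).mulVec v = μ • v := by
    rw [Matrix.sub_mulVec, sub_eq_zero] at hv
    rw [← hv]
    rw [show (algebraMap ℂ (Matrix (Fin n) (Fin n) ℂ)) μ = μ • 1 by
      simp [Algebra.algebraMap_eq_smul_one]]
    rw [Matrix.smul_mulVec, Matrix.one_mulVec]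
  have hpow : ∀ t, ((A.map Complex.ofReal) ^ t).mulVec v = μ ^ t • v := by
    intro t
    induction t with
    | zero => simp [Matrix.one_mulVec]
    | succ t ih =>
      rw [pow_succ', ← Matrix.mulVec_mulVec, ih, Matrix.mulVec_smul, heig, smul_smul, ← pow_succ]
  obtain ⟨i, hvi⟩ := Function.ne_iff.mp hv0
  have hvi' : v i ≠ 0 := by simpa using hvi
  set vre : Fin n → ℝ := fun j => (v j).re with hvre
  set vim : Fin n → ℝ := fun j => (v j).im with hvim
  have traj : ∀ w : Fin n → ℝ,
      Filter.Tendsto (fun t => (A ^ t).mulVec w) Filter.atTop (nhds 0) := by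
    intro w
    refine part1 _ fun t => ?_
    rw [pow_succ', ← Matrix.mulVec_mulVec]
  have hmap : ∀ t : ℕ, (A ^ t).map Complex.ofReal = (A.map Complex.ofReal) ^ t := by
    intro t
    have := map_pow (Complex.ofRealHom.mapMatrix) A t
    exact this
  have hsplit : ∀ (t : ℕ) (j : Fin n),
      ((A ^ t).map Complex.ofReal).mulVec v j
        = Complex.ofReal ((A ^ t).mulVec vre j)
          + Complex.ofReal ((A ^ t).mulVec vim j) * Complex.I := by
    intro t j
    apply Complex.ext
    · simp [Matrix.mulVec, dotProduct, Matrix.map_apply, Complex.re_sum, hvre]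
    · simp [Matrix.mulVec, dotProduct, Matrix.map_apply, Complex.im_sum, hvim]
  have htends : Filter.Tendsto (fun t => μ ^ t * v i) Filter.atTop (nhds 0) := by
    have h1 := traj vre
    have h2 := traj vim
    have h1' : Filter.Tendsto (fun t => ((A ^ t).mulVec vre i : ℂ)) Filter.atTop (nhds 0) := by
      have hx : Filter.Tendsto (fun t => (A ^ t).mulVec vre i) Filter.atTop (nhds 0) := by
        have := ((continuous_apply i).tendsto (0 : Fin n → ℝ)).comp h1
        simpa [Function.comp_def] using this
      have := (Complex.continuous_ofReal.tendsto 0).comp hx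
      simpa [Function.comp_def] using this
    have h2' : Filter.Tendsto (fun t => ((A ^ t).mulVec vim i : ℂ)) Filter.atTop (nhds 0) := by
      have hx : Filter.Tendsto (fun t => (A ^ t).mulVec vim i) Filter.atTop (nhds 0) := by
        have := ((continuous_apply i).tendsto (0 : Fin n → ℝ)).comp h2
        simpa [Function.comp_def] using this
      have := (Complex.continuous_ofReal.tendsto 0).comp hx
      simpa [Function.comp_def] using this
    have heq : ∀ t, μ ^ t * v i
        = Complex.ofReal ((A ^ t).mulVec vre i)
          + Complex.ofReal ((A ^ t).mulVec vim i) * Complex.I := by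
      intro t
      rw [← hsplit t i, hmap t, hpow t]
      simp [Pi.smul_apply, smul_eq_mul]
    rw [show (fun t => μ ^ t * v i) = fun t =>
        Complex.ofReal ((A ^ t).mulVec vre i)
          + Complex.ofReal ((A ^ t).mulVec vim i) * Complex.I from funext heq]
    simpa using h1'.add (h2'.mul_const Complex.I)
  by_contra hcon
  push_neg at hcon
  have hnorm := htends.norm
  rw [norm_zero] at hnorm
  have hpos : (0 : ℝ) < ‖v i‖ := by simpa using hvi'
  obtain ⟨t, ht⟩ := (hnorm.eventually_lt_const hpos).exists
  have hge : ‖v i‖ ≤ ‖μ ^ t * v i‖ := by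
    rw [norm_mul, norm_pow]
    have h1 : (1 : ℝ) ≤ ‖μ‖ ^ t := one_le_pow₀ (by assumption)
    nlinarith [norm_nonneg (v i)]
  linarith
end

section
/- (Theorem 1.) Let η > 0, let W ∈ ℝ^{f×n} have full column rank with left inverse W⁺ (W⁺ W = I_n), and suppose there exist K ∈ ℝ^{m×n} and a matrix-valued function M : P → ℝ^{f×f} such that for every (A, B, Δx, Δu) ∈ P̄: (i) for every i ∈ 1..f, 1 − η − Σ_{j=1}^f M_{ij}(A, B) ≥ 0, and (ii) for every i, j ∈ 1..f, M_{ij}(A, B) − [W(A+BK)W⁺]_{ij} ≥ 0 and M_{ij}(A, B) + [W(A+BK)W⁺]_{ij} ≥ 0. Then for every plant (A, B) in the consistency set P, the closed-loop matrix A + BK is W-superstable, i.e. ‖W(A+BK)W⁺‖_∞ ≤ 1 − η < 1. -/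
/-- The Euclidean norm `‖v‖₂` of a finite real vector. -/
noncomputable def euclNorm {k : ℕ} (v : Fin k → ℝ) : ℝ :=
  Real.sqrt (∑ i, v i ^ 2)

/-- The eivResidual `h⁰_t(A,B) = x̂_{t+1} − A x̂_t − B û_t`.
(The paper's states `x̂_1, …, x̂_T` are indexed here by `Fin (T+1)`, with the
inputs `û_1, …, û_{T−1}` indexed by `Fin T`.) -/
def eivResidual {n m T : ℕ} (xhat : Fin (T + 1) → Fin n → ℝ) (uhat : Fin T → Fin m → ℝ)
    (A : Matrix (Fin n) (Fin n) ℝ) (B : Matrix (Fin n) (Fin m) ℝ) (t : Fin T) :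
    Fin n → ℝ :=
  xhat t.succ - A.mulVec (xhat t.castSucc) - B.mulVec (uhat t)

/-- The stacking of blocks `v_t ∈ ℝ^k`, `t = 1..T`, into a single vector of `ℝ^{kT}`. -/
def stack2 {T k : ℕ} (v : Fin T → Fin k → ℝ) : Fin T × Fin k → ℝ :=
  fun p => v p.1 p.2

/-- The joint consistency set `P̄` of tuples `(A, B, Δx, Δu)` satisfying the
error-in-variables dynamics with eivResidual `h⁰` and the quadratic noise bounds
`‖F_ℓ Δx + G_ℓ Δu‖₂ ≤ 1` for `ℓ = 1..L`. -/
def consistentBar {n m T L : ℕ} (nl : Fin L → ℕ)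
    (xhat : Fin (T + 1) → Fin n → ℝ) (uhat : Fin T → Fin m → ℝ)
    (F : (ℓ : Fin L) → Matrix (Fin (nl ℓ)) (Fin (T + 1) × Fin n) ℝ)
    (G : (ℓ : Fin L) → Matrix (Fin (nl ℓ)) (Fin T × Fin m) ℝ) :
    Set (Matrix (Fin n) (Fin n) ℝ × Matrix (Fin n) (Fin m) ℝ ×
      (Fin (T + 1) → Fin n → ℝ) × (Fin T → Fin m → ℝ)) :=
  {p | (∀ t : Fin T, p.2.2.1 t.succ =
          p.1.mulVec (p.2.2.1 t.castSucc) + p.2.1.mulVec (p.2.2.2 t) +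
            eivResidual xhat uhat p.1 p.2.1 t) ∧
       (∀ ℓ : Fin L,
          euclNorm ((F ℓ).mulVec (stack2 p.2.2.1) + (G ℓ).mulVec (stack2 p.2.2.2)) ≤ 1)}

/-- The consistency set `P`: the projection of `P̄` onto the plant coordinates `(A, B)`. -/
def consistent {n m T L : ℕ} (nl : Fin L → ℕ)
    (xhat : Fin (T + 1) → Fin n → ℝ) (uhat : Fin T → Fin m → ℝ)
    (F : (ℓ : Fin L) → Matrix (Fin (nl ℓ)) (Fin (T + 1) × Fin n) ℝ)
    (G : (ℓ : Fin L) → Matrix (Fin (nl ℓ)) (Fin T × Fin m) ℝ) :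
    Set (Matrix (Fin n) (Fin n) ℝ × Matrix (Fin n) (Fin m) ℝ) :=
  {q | ∃ dx du, (q.1, q.2, dx, du) ∈ consistentBar nl xhat uhat F G}

theorem matInfNorm_le_of_abs_le {f : ℕ} (hf : 0 < f) {C M : Matrix (Fin f) (Fin f) ℝ} {c : ℝ}
    (hCM : ∀ i j, |C i j| ≤ M i j) (hM : ∀ i, ∑ j, M i j ≤ c) : matInfNorm C ≤ c := by
  have : Nonempty (Fin f) := Fin.pos_iff_nonempty.1 hf
  exact ciSup_le fun i => (Finset.sum_le_sum fun j _ => hCM i j).trans (hM i)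

theorem stmt4_general (n m f T L : ℕ) (hf : 0 < f) (nl : Fin L → ℕ)
    (xhat : Fin (T + 1) → Fin n → ℝ) (uhat : Fin T → Fin m → ℝ)
    (F : (ℓ : Fin L) → Matrix (Fin (nl ℓ)) (Fin (T + 1) × Fin n) ℝ)
    (G : (ℓ : Fin L) → Matrix (Fin (nl ℓ)) (Fin T × Fin m) ℝ)
    (η : ℝ) (hη : 0 < η)
    (W : Matrix (Fin f) (Fin n) ℝ) (Wp : Matrix (Fin n) (Fin f) ℝ)
    (K : Matrix (Fin m) (Fin n) ℝ)
    (M : Matrix (Fin n) (Fin n) ℝ × Matrix (Fin n) (Fin m) ℝ → Matrix (Fin f) (Fin f) ℝ)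
    (hrow : ∀ p ∈ consistentBar nl xhat uhat F G, ∀ i : Fin f,
        0 ≤ 1 - η - ∑ j, M (p.1, p.2.1) i j)
    (helem : ∀ p ∈ consistentBar nl xhat uhat F G, ∀ i j : Fin f,
        0 ≤ M (p.1, p.2.1) i j - (W * (p.1 + p.2.1 * K) * Wp) i j ∧
        0 ≤ M (p.1, p.2.1) i j + (W * (p.1 + p.2.1 * K) * Wp) i j) :
    ∀ q ∈ consistent nl xhat uhat F G,
      matInfNorm (W * (q.1 + q.2 * K) * Wp) ≤ 1 - η ∧
      matInfNorm (W * (q.1 + q.2 * K) * Wp) < 1 := by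
  rintro ⟨A, B⟩ ⟨dx, du, hp⟩
  have habs : ∀ i j, |(W * (A + B * K) * Wp) i j| ≤ M (A, B) i j := fun i j =>
    abs_le.2 ⟨by linarith [(helem _ hp i j).2], by linarith [(helem _ hp i j).1]⟩
  have hrowSum : ∀ i, ∑ j, M (A, B) i j ≤ 1 - η := fun i => by linarith [hrow _ hp i]
  have hnorm := matInfNorm_le_of_abs_le hf habs hrowSum
  exact ⟨hnorm, by linarith⟩

theorem stmt4 (n m f T L : ℕ) (hn : 0 < n) (hf : 0 < f) (nl : Fin L → ℕ)
    (xhat : Fin (T + 1) → Fin n → ℝ) (uhat : Fin T → Fin m → ℝ)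
    (F : (ℓ : Fin L) → Matrix (Fin (nl ℓ)) (Fin (T + 1) × Fin n) ℝ)
    (G : (ℓ : Fin L) → Matrix (Fin (nl ℓ)) (Fin T × Fin m) ℝ)
    (η : ℝ) (hη : 0 < η)
    (W : Matrix (Fin f) (Fin n) ℝ) (Wp : Matrix (Fin n) (Fin f) ℝ)
    (hW : Wp * W = 1)
    (K : Matrix (Fin m) (Fin n) ℝ)
    (M : Matrix (Fin n) (Fin n) ℝ × Matrix (Fin n) (Fin m) ℝ → Matrix (Fin f) (Fin f) ℝ)
    (hrow : ∀ p ∈ consistentBar nl xhat uhat F G, ∀ i : Fin f,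
        0 ≤ 1 - η - ∑ j, M (p.1, p.2.1) i j)
    (helem : ∀ p ∈ consistentBar nl xhat uhat F G, ∀ i j : Fin f,
        0 ≤ M (p.1, p.2.1) i j - (W * (p.1 + p.2.1 * K) * Wp) i j ∧
        0 ≤ M (p.1, p.2.1) i j + (W * (p.1 + p.2.1 * K) * Wp) i j) :
    ∀ q ∈ consistent nl xhat uhat F G,
      matInfNorm (W * (q.1 + q.2 * K) * Wp) ≤ 1 - η ∧
      matInfNorm (W * (q.1 + q.2 * K) * Wp) < 1 :=
  stmt4_general n m f T L hf nl xhat uhat F G η hη W Wp K M hrow helem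
end

section
/- For every s ∈ ℝ^n and τ ∈ ℝ, one has ‖s‖₂ ≤ τ if and only if there exists z ∈ ℝ^n such that τ = Σ_{i=1}^n z_i and, for each i = 1..n, the 2×2 matrix [[τ, s_i],[s_i, z_i]] is positive semidefinite (equivalently, τ ≥ 0, z_i ≥ 0, and s_i² ≤ τ z_i for every i). -/
lemma psd2 (a b c : ℝ) :
    (!![a, b; b, c] : Matrix (Fin 2) (Fin 2) ℝ).PosSemidef ↔
      0 ≤ a ∧ 0 ≤ c ∧ b ^ 2 ≤ a * c := by
  constructor
  · intro h
    have quad : ∀ x : Fin 2 → ℝ, 0 ≤ a * x 0 ^ 2 + 2 * b * x 0 * x 1 + c * x 1 ^ 2 := by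
      intro x
      have := h.dotProduct_mulVec_nonneg x
      simp [Matrix.mulVec, dotProduct, Fin.sum_univ_two] at this
      nlinarith [this]
    have ha : 0 ≤ a := by have := quad ![1, 0]; simpa using this
    have hc : 0 ≤ c := by have := quad ![0, 1]; simpa using this
    refine ⟨ha, hc, ?_⟩
    rcases eq_or_lt_of_le ha with ha0 | hA
    · -- a = 0, show b = 0 using x = ![1, -b/(c+1)]
      have hc1 : (0:ℝ) < c + 1 := by linarith
      have h1 := quad ![c + 1, -b]
      simp [← ha0] at h1
      have hb : b = 0 := by nlinarith [sq_nonneg b, h1]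
      rw [hb, ← ha0]
      simp
    · have h1 := quad ![b, -a]
      simp at h1
      nlinarith [h1]
  · rintro ⟨ha, hc, hb⟩
    refine Matrix.PosSemidef.of_dotProduct_mulVec_nonneg ?_ ?_
    · ext i j
      fin_cases i <;> fin_cases j <;> simp [Matrix.conjTranspose, Matrix.vecHead, Matrix.vecTail]
    · intro x
      simp [Matrix.mulVec, dotProduct, Fin.sum_univ_two]
      rcases eq_or_lt_of_le ha with ha0 | hA
      · have hb0 : b = 0 := by nlinarith [sq_nonneg b]
        rw [hb0, ← ha0]
        nlinarith [mul_nonneg hc (sq_nonneg (x 1))]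
      · nlinarith [sq_nonneg (a * x 0 + b * x 1),
          mul_nonneg (sub_nonneg.2 hb) (sq_nonneg (x 1))]

theorem stmt8 (n : ℕ) (hn : 0 < n) (s : Fin n → ℝ) (τ : ℝ) :
    euclNorm s ≤ τ ↔
      ∃ z : Fin n → ℝ, τ = ∑ i, z i ∧
        ∀ i, (!![τ, s i; s i, z i] : Matrix (Fin 2) (Fin 2) ℝ).PosSemidef := by
  have hSnn : (0:ℝ) ≤ ∑ i, s i ^ 2 := Finset.sum_nonneg fun i _ => sq_nonneg _
  constructor
  · intro h
    have hτ : 0 ≤ τ := le_trans (Real.sqrt_nonneg _) h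
    have hsum : ∑ i, s i ^ 2 ≤ τ ^ 2 := by
      have h2 := Real.sq_sqrt hSnn
      unfold euclNorm at h
      nlinarith [Real.sqrt_nonneg (∑ i, s i ^ 2)]
    rcases eq_or_lt_of_le hτ with hτ0 | hτp
    · -- τ = 0, hence s = 0
      have hs0 : ∀ i, s i = 0 := by
        intro i
        have h1 : s i ^ 2 ≤ ∑ j, s j ^ 2 :=
          Finset.single_le_sum (fun j _ => sq_nonneg (s j)) (Finset.mem_univ i)
        nlinarith [sq_nonneg (s i)]
      refine ⟨0, by simp [← hτ0], fun i => ?_⟩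
      rw [psd2]
      simp [hs0 i, ← hτ0]
    · refine ⟨fun i => s i ^ 2 / τ + (τ - (∑ j, s j ^ 2) / τ) / n, ?_, ?_⟩
      · rw [Finset.sum_add_distrib, ← Finset.sum_div, Finset.sum_const, Finset.card_univ,
          Fintype.card_fin, nsmul_eq_mul]
        field_simp
        ring
      · intro i
        rw [psd2]
        have hrest : 0 ≤ (τ - (∑ j, s j ^ 2) / τ) / n := by
          apply div_nonneg _ (Nat.cast_nonneg n)
          rw [sub_nonneg, div_le_iff₀ hτp]
          nlinarith
        refine ⟨hτ, ?_, ?_⟩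
        · positivity
        · have : s i ^ 2 ≤ τ * (s i ^ 2 / τ) := by
            rw [mul_div_cancel₀ _ (ne_of_gt hτp)]
          nlinarith [mul_nonneg hτ hrest]
  · rintro ⟨z, hz, hpsd⟩
    have key : ∀ i, 0 ≤ τ ∧ 0 ≤ z i ∧ s i ^ 2 ≤ τ * z i := fun i => (psd2 _ _ _).1 (hpsd i)
    have hτ : 0 ≤ τ := (key ⟨0, hn⟩).1
    have hsum : ∑ i, s i ^ 2 ≤ τ ^ 2 := by
      calc ∑ i, s i ^ 2 ≤ ∑ i, τ * z i := Finset.sum_le_sum fun i _ => (key i).2.2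
        _ = τ * ∑ i, z i := by rw [Finset.mul_sum]
        _ = τ ^ 2 := by rw [← hz]; ring
    unfold euclNorm
    calc Real.sqrt (∑ i, s i ^ 2) ≤ Real.sqrt (τ ^ 2) := Real.sqrt_le_sqrt hsum
      _ = τ := by rw [Real.sqrt_sq hτ]
end

section
/- (Extended superstabilization over the consistency set.) Suppose there exist v ∈ ℝ^n with v_i > 0 for all i, S ∈ ℝ^{m×n}, and a matrix-valued function M : P → ℝ^{n×n} such that for every (A, B) ∈ P: for every i, Σ_{j=1}^n M_{ij}(A, B) < v_i, and for every i, j, |A_{ij} v_j + Σ_{ℓ=1}^m B_{iℓ} S_{ℓj}| ≤ M_{ij}(A, B). Then the single gain K := S · diag(v)⁻¹ satisfies, for every (A, B) ∈ P, ‖diag(v)⁻¹ (A + B K) diag(v)‖_∞ < 1; i.e., the controller u = Kx renders A + BK W-superstable with W = diag(v)⁻¹ for all data-consistent plants simultaneously. -/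
/-!
Conjugating by `diag v` turns row `i` of the closed-loop matrix into
`(v i)⁻¹ (A i j v j + (B S) i j)`, so its absolute row sum is at most `(v i)⁻¹ ∑ j M i j < 1`.
-/

namespace Matrix

variable {ι κ K : Type*} [Fintype ι] [DecidableEq ι] [Fintype κ] [Field K]

theorem inv_diagonal_of_ne_zero {v : ι → K} (hv : ∀ i, v i ≠ 0) :
    (diagonal v)⁻¹ = diagonal fun i => (v i)⁻¹ := by
  refine inv_eq_left_inv ?_
  rw [diagonal_mul_diagonal, ← diagonal_one]
  exact congrArg diagonal (funext fun i => inv_mul_cancel₀ (hv i))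

theorem inv_mul_add_mul_mul_inv_mul (D A : Matrix ι ι K) (B : Matrix ι κ K)
    (S : Matrix κ ι K) (hD : IsUnit D.det) :
    D⁻¹ * (A + B * (S * D⁻¹)) * D = D⁻¹ * (A * D + B * S) := by
  rw [Matrix.mul_assoc, Matrix.add_mul, Matrix.mul_assoc B, nonsing_inv_mul_cancel_right D S hD]

end Matrix

open Matrix

theorem matInfNorm_lt_of_forall_sum_abs_lt {f : ℕ} {C : Matrix (Fin f) (Fin f) ℝ} {r : ℝ}
    (hr : 0 < r) (h : ∀ i, ∑ j, |C i j| < r) : matInfNorm C < r := by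
  rcases isEmpty_or_nonempty (Fin f) with _ | _
  · rwa [matInfNorm, Real.iSup_of_isEmpty]
  · obtain ⟨i₀, hi₀⟩ := Finite.exists_max fun i => ∑ j, |C i j|
    exact (ciSup_le hi₀).trans_lt (h i₀)

theorem matInfNorm_diagonal_inv_mul_lt_one {f : ℕ} {v : Fin f → ℝ} (hv : ∀ i, 0 < v i)
    {X M : Matrix (Fin f) (Fin f) ℝ} (hXM : ∀ i j, |X i j| ≤ M i j) (hM : ∀ i, ∑ j, M i j < v i) :
    matInfNorm ((diagonal v)⁻¹ * X) < 1 := by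
  rw [inv_diagonal_of_ne_zero fun i => (hv i).ne']
  refine matInfNorm_lt_of_forall_sum_abs_lt one_pos fun i => ?_
  have hvi : 0 < (v i)⁻¹ := inv_pos.2 (hv i)
  calc ∑ j, |(diagonal (fun i => (v i)⁻¹) * X) i j|
      = (v i)⁻¹ * ∑ j, |X i j| := by
        simp only [diagonal_mul, abs_mul, abs_of_pos hvi, Finset.mul_sum]
    _ ≤ (v i)⁻¹ * ∑ j, M i j := by gcongr with j; exact hXM i j
    _ < (v i)⁻¹ * v i := by gcongr; exact hM i
    _ = 1 := inv_mul_cancel₀ (hv i).ne'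

theorem stmt14 (n m T L : ℕ) (nl : Fin L → ℕ)
    (xhat : Fin (T + 1) → Fin n → ℝ) (uhat : Fin T → Fin m → ℝ)
    (F : (ℓ : Fin L) → Matrix (Fin (nl ℓ)) (Fin (T + 1) × Fin n) ℝ)
    (G : (ℓ : Fin L) → Matrix (Fin (nl ℓ)) (Fin T × Fin m) ℝ)
    (v : Fin n → ℝ) (hv : ∀ i, 0 < v i)
    (S : Matrix (Fin m) (Fin n) ℝ)
    (M : Matrix (Fin n) (Fin n) ℝ × Matrix (Fin n) (Fin m) ℝ → Matrix (Fin n) (Fin n) ℝ)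
    (hrow : ∀ q ∈ consistent nl xhat uhat F G, ∀ i, ∑ j, M q i j < v i)
    (helem : ∀ q ∈ consistent nl xhat uhat F G, ∀ i j,
        |q.1 i j * v j + ∑ ℓ, q.2 i ℓ * S ℓ j| ≤ M q i j) :
    -- the single gain K = S · diag(v)⁻¹ W-superstabilizes every consistent plant,
    -- with W = diag(v)⁻¹ (so W⁻¹ = diag(v)):
    ∀ q ∈ consistent nl xhat uhat F G,
      matInfNorm ((Matrix.diagonal v)⁻¹ *
        (q.1 + q.2 * (S * (Matrix.diagonal v)⁻¹)) * Matrix.diagonal v) < 1 := by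
  intro q hq
  have hdet : IsUnit (diagonal v).det := by
    simpa [det_diagonal, Finset.prod_ne_zero_iff] using fun i => (hv i).ne'
  rw [inv_mul_add_mul_mul_inv_mul _ _ _ _ hdet]
  refine matInfNorm_diagonal_inv_mul_lt_one hv (fun i j => ?_) (hrow q hq)
  rw [Matrix.add_apply, mul_diagonal, mul_apply]
  exact helem q hq i j
end
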